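/- arXiv:math/0406199 — 2 statements merged into one kernel-verified Lean document; each statement's English description precedes it below -/
import Mathlib

section
/- Let f be a homogeneous polynomial of degree m ≥ 1 in k variables with rational coefficients, and let A be a k×k matrix with integer entries and determinant ±1 which is hyperbolic, i.e. every root λ ∈ ℂ of its characteristic polynomial satisfies |λ| ≠ 1. Assume f(Ax) = f(x) for all x. Then for every p ∈ ℚ, if there exists a nonzero x ∈ ℤ^k with f(x) = p, then the set S_p = { x ∈ ℤ^k : f(x) = p } is infinite. -/
/-!
The orbit `n ↦ Aⁿ x₀` stays in the level set because `f` is `A`-invariant, so it suffices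
that the orbit is infinite. Since `A` is invertible, a repetition `Aᵃ x₀ = Aᵇ x₀` with `a < b`
would make `x₀` a nonzero fixed vector of `Aᵈ`, `d = b - a`. Then `1` is an eigenvalue of `Aᵈ`,
so by the spectral mapping theorem over `ℂ` some eigenvalue `z` of `A` satisfies `zᵈ = 1`,
hence `‖z‖ = 1`, contradicting hyperbolicity.
-/

open Function Matrix Polynomial

theorem Function.Injective.injective_iterate_apply {α : Type*} {f : α → α} (hf : Injective f)
    {x : α} (hx : x ∉ periodicPts f) : Injective fun n => f^[n] x := by
  refine Injective.of_lt_imp_ne fun a b hab heq => ?_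
  refine hx ⟨b - a, Nat.sub_pos_of_lt hab, (hf.iterate a).eq_iff.1 ?_⟩
  rw [← iterate_add_apply, Nat.add_sub_cancel' hab.le, heq]

namespace Matrix

variable {n R : Type*} [Fintype n] [DecidableEq n]

theorem iterate_mulVec [Semiring R] (A : Matrix n n R) (d : ℕ) (v : n → R) :
    A.mulVec^[d] v = (A ^ d) *ᵥ v := by
  induction d with
  | zero => simp
  | succ d ih => rw [iterate_succ_apply', ih, mulVec_mulVec, pow_succ']

theorem mem_spectrum_of_mulVec_eq_smul [CommRing R] {M : Matrix n n R} {μ : R} {v : n → R}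
    (hv : v ≠ 0) (h : M *ᵥ v = μ • v) : μ ∈ spectrum R M := by
  intro hunit
  refine hv (mulVec_injective_of_isUnit hunit ?_)
  simp [sub_mulVec, h, Algebra.algebraMap_eq_smul_one, smul_mulVec]

theorem eq_zero_of_pow_mulVec_eq_self {M : Matrix n n ℂ}
    (hM : ∀ z, M.charpoly.IsRoot z → ‖z‖ ≠ 1) {d : ℕ} (hd : 0 < d) {v : n → ℂ}
    (hv : (M ^ d) *ᵥ v = v) : v = 0 := by
  by_contra hv0
  have hone : (1 : ℂ) ∈ spectrum ℂ (M ^ d) := mem_spectrum_of_mulVec_eq_smul hv0 (by simpa)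
  rw [spectrum.map_pow_of_pos M hd] at hone
  obtain ⟨z, hz, hzd⟩ := hone
  exact hM z (mem_spectrum_iff_isRoot_charpoly.1 hz) (Complex.norm_eq_one_of_pow_eq_one hzd hd.ne')

theorem notMem_periodicPts_mulVec [CommRing R] [Algebra R ℂ] [FaithfulSMul R ℂ]
    {A : Matrix n n R} (hA : ∀ z : ℂ, aeval z A.charpoly = 0 → ‖z‖ ≠ 1) {x : n → R}
    (hx : x ≠ 0) : x ∉ periodicPts A.mulVec := by
  rintro ⟨d, hd, hper⟩
  have hroots : ∀ z, (A.map (algebraMap R ℂ)).charpoly.IsRoot z → ‖z‖ ≠ 1 := fun z hz =>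
    hA z (by rwa [charpoly_map, IsRoot.def, eval_map_algebraMap] at hz)
  have hfix : (A.map (algebraMap R ℂ) ^ d) *ᵥ (algebraMap R ℂ ∘ x) = algebraMap R ℂ ∘ x := by
    ext i
    rw [← Matrix.map_pow, ← RingHom.map_mulVec, ← iterate_mulVec, hper.eq, Function.comp_apply]
  have hzero := eq_zero_of_pow_mulVec_eq_self hroots hd hfix
  exact hx (funext fun i => FaithfulSMul.algebraMap_injective R ℂ (by simpa using congrFun hzero i))

end Matrix

theorem integer_level_set_infinite_general (k : ℕ)
    (f : MvPolynomial (Fin k) ℚ)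
    (A : Matrix (Fin k) (Fin k) ℤ) (hdet : A.det = 1 ∨ A.det = -1)
    (hhyp : ∀ z : ℂ, Polynomial.aeval z A.charpoly = 0 → ‖z‖ ≠ 1)
    (hinv : ∀ x : Fin k → ℚ,
      MvPolynomial.eval (fun i => ∑ j, (A i j : ℚ) * x j) f = MvPolynomial.eval x f)
    (p : ℚ) (x₀ : Fin k → ℤ) (hx₀ : x₀ ≠ 0)
    (hfx₀ : MvPolynomial.eval (fun i => (x₀ i : ℚ)) f = p) :
    {x : Fin k → ℤ | MvPolynomial.eval (fun i => (x i : ℚ)) f = p}.Infinite := by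
  set g : (Fin k → ℤ) → ℚ := fun x => MvPolynomial.eval (fun i => (x i : ℚ)) f
  have hA : IsUnit A := (isUnit_iff_isUnit_det A).2 (Int.isUnit_iff.2 hdet)
  have hg : Semiconj g A.mulVec id := fun x => by
    simpa [g, mulVec, dotProduct] using hinv fun i => (x i : ℚ)
  refine Set.infinite_of_injective_forall_mem
    ((mulVec_injective_of_isUnit hA).injective_iterate_apply
      (notMem_periodicPts_mulVec hhyp hx₀)) fun n => ?_
  change g _ = p
  rw [hg.iterate_right n x₀, iterate_id, id]
  exact hfx₀

/-- if a nonconstant homogeneous polynomial `f` with rational coefficients is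
invariant under a hyperbolic unimodular integer matrix `A`, then for every `p ∈ ℚ`, if the
level set `S_p = {x ∈ ℤ^k : f(x) = p}` contains a nonzero point, it is infinite. -/
theorem integer_level_set_infinite (k m : ℕ) (hm : 1 ≤ m)
    (f : MvPolynomial (Fin k) ℚ) (hf : f.IsHomogeneous m)
    (A : Matrix (Fin k) (Fin k) ℤ) (hdet : A.det = 1 ∨ A.det = -1)
    (hhyp : ∀ z : ℂ, Polynomial.aeval z A.charpoly = 0 → ‖z‖ ≠ 1)
    (hinv : ∀ x : Fin k → ℚ,
      MvPolynomial.eval (fun i => ∑ j, (A i j : ℚ) * x j) f = MvPolynomial.eval x f)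
    (p : ℚ) (x₀ : Fin k → ℤ) (hx₀ : x₀ ≠ 0)
    (hfx₀ : MvPolynomial.eval (fun i => (x₀ i : ℚ)) f = p) :
    {x : Fin k → ℤ | MvPolynomial.eval (fun i => (x i : ℚ)) f = p}.Infinite :=
  integer_level_set_infinite_general k f A hdet hhyp hinv p x₀ hx₀ hfx₀
end

section
/- Let λ₁ and λ₂ be two distinct positive real algebraic integers of degree 3 over ℚ that are conjugate (they have the same minimal polynomial over ℚ), totally real (all complex roots of their minimal polynomial are real), and units (the constant term of their minimal polynomial is ±1, equivalently λᵢ⁻¹ is also an algebraic integer). Then the degree of λ₁/λ₂ over ℚ is not equal to 2. -/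
open Polynomial IntermediateField

set_option maxHeartbeats 1000000

/-- if `λ₁ ≠ λ₂` are positive conjugate totally real algebraic units of
degree 3 over `ℚ`, then `λ₁/λ₂` does not have degree 2 over `ℚ`. -/
theorem ratio_of_conjugate_cubic_units_not_degree_two
    (l₁ l₂ : ℝ) (hpos₁ : 0 < l₁) (hpos₂ : 0 < l₂) (hne : l₁ ≠ l₂)
    (hint₁ : IsIntegral ℤ l₁) (hint₂ : IsIntegral ℤ l₂)
    (hdeg₁ : (minpoly ℚ l₁).natDegree = 3) (hdeg₂ : (minpoly ℚ l₂).natDegree = 3)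
    (hconj : minpoly ℚ l₁ = minpoly ℚ l₂)
    (htotreal : ∀ z : ℂ, Polynomial.aeval z (minpoly ℚ l₁) = 0 → z.im = 0)
    (hunit₁ : IsIntegral ℤ l₁⁻¹) (hunit₂ : IsIntegral ℤ l₂⁻¹) :
    (minpoly ℚ (l₁ / l₂)).natDegree ≠ 2 := by
  intro hdeg
  have hl₁0 : l₁ ≠ 0 := ne_of_gt hpos₁
  have hl₂0 : l₂ ≠ 0 := ne_of_gt hpos₂
  have hq₁ : IsIntegral ℚ l₁ := hint₁.tower_top
  have hq₂ : IsIntegral ℚ l₂ := hint₂.tower_top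
  have hqi₂ : IsIntegral ℚ l₂⁻¹ := hunit₂.tower_top
  have hqμ : IsIntegral ℚ (l₁ / l₂) := by
    rw [div_eq_mul_inv]; exact hq₁.mul hqi₂
  set p : ℚ[X] := minpoly ℚ l₁ with hp
  set q : ℚ[X] := minpoly ℚ (l₁ / l₂) with hq
  have hp0 : p ≠ 0 := minpoly.ne_zero hq₁
  have hq0 : q ≠ 0 := minpoly.ne_zero hqμ
  -- complex images
  have hminA : minpoly ℚ ((l₁ : ℂ)) = p := by
    rw [show ((l₁ : ℂ)) = algebraMap ℝ ℂ l₁ from rfl,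
      minpoly.algebraMap_eq (algebraMap ℝ ℂ).injective]
  have hminB : minpoly ℚ ((l₂ : ℂ)) = p := by
    rw [show ((l₂ : ℂ)) = algebraMap ℝ ℂ l₂ from rfl,
      minpoly.algebraMap_eq (algebraMap ℝ ℂ).injective]
    exact hconj.symm
  have hcast : ((l₁ / l₂ : ℝ) : ℂ) = (l₁ : ℂ) / (l₂ : ℂ) := Complex.ofReal_div _ _
  have hminM : minpoly ℚ ((l₁ : ℂ) / (l₂ : ℂ)) = q := by
    rw [← hcast, show ((l₁ / l₂ : ℝ) : ℂ) = algebraMap ℝ ℂ (l₁ / l₂) from rfl,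
      minpoly.algebraMap_eq (algebraMap ℝ ℂ).injective]
  have ha_int : IsIntegral ℚ ((l₁ : ℂ)) := hq₁.map (IsScalarTower.toAlgHom ℚ ℝ ℂ)
  have hb_int : IsIntegral ℚ ((l₂ : ℂ)) := hq₂.map (IsScalarTower.toAlgHom ℚ ℝ ℂ)
  have hab : (l₁ : ℂ) ≠ (l₂ : ℂ) := by exact_mod_cast hne
  have ha0 : (l₁ : ℂ) ≠ 0 := by exact_mod_cast hl₁0
  have hb0 : (l₂ : ℂ) ≠ 0 := by exact_mod_cast hl₂0
  -- roots of p in ℂ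
  set M : Multiset ℂ := (p.map (algebraMap ℚ ℂ)).roots with hM
  have hMcard : Multiset.card M = 3 := by
    rw [hM, ← (IsAlgClosed.splits (p.map (algebraMap ℚ ℂ))).natDegree_eq_card_roots, natDegree_map, hdeg₁]
  have hsep : p.Separable := (minpoly.irreducible hq₁).separable
  have hnodup : M.Nodup := nodup_roots (hsep.map)
  have rootM : ∀ z : ℂ, aeval z p = 0 → z ∈ M := by
    intro z hz
    rw [hM, mem_roots_map hp0]
    rwa [aeval_def] at hz
  have rootM' : ∀ z : ℂ, z ∈ M → aeval z p = 0 := by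
    intro z hz
    rw [hM, mem_roots_map hp0] at hz
    rwa [aeval_def]
  have haM : (l₁ : ℂ) ∈ M := rootM _ (by rw [← hminA]; exact minpoly.aeval ℚ _)
  have hbM : (l₂ : ℂ) ∈ M := rootM _ (by rw [← hminB]; exact minpoly.aeval ℚ _)
  -- third root c
  have hbM' : (l₂ : ℂ) ∈ M.erase (l₁ : ℂ) := (Multiset.mem_erase_of_ne hab.symm).mpr hbM
  obtain ⟨c, hc⟩ : ∃ c, c ∈ (M.erase (l₁ : ℂ)).erase (l₂ : ℂ) := by
    apply Multiset.exists_mem_of_ne_zero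
    intro h
    have : Multiset.card ((M.erase (l₁ : ℂ)).erase (l₂ : ℂ)) = 1 := by
      rw [Multiset.card_erase_of_mem hbM', Multiset.card_erase_of_mem haM, hMcard]
      rfl
    rw [h] at this; simp at this
  have hca : c ≠ (l₁ : ℂ) := by
    intro h
    exact hnodup.notMem_erase (h ▸ Multiset.mem_of_mem_erase hc)
  have hcb : c ≠ (l₂ : ℂ) := by
    intro h
    exact (hnodup.erase _).notMem_erase (h ▸ hc)
  have hcM : c ∈ M := Multiset.mem_of_mem_erase (Multiset.mem_of_mem_erase hc)
  have hc0 : c ≠ 0 := by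
    intro h
    have := rootM' c hcM
    rw [h, aeval_def, eval₂_at_zero] at this
    have h0 : p.coeff 0 = 0 := by
      exact_mod_cast (map_eq_zero_iff _ (algebraMap ℚ ℂ).injective).mp this
    exact hl₁0 ((minpoly.coeff_zero_eq_zero hq₁).mp h0)
  -- the field L = ℚ(a,b)
  haveI : Finite ({(l₁ : ℂ), (l₂ : ℂ)} : Set ℂ) :=
    Set.Finite.to_subtype ((Set.finite_singleton _).insert _)
  set L : IntermediateField ℚ ℂ := IntermediateField.adjoin ℚ {(l₁ : ℂ), (l₂ : ℂ)} with hL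
  have haL : (l₁ : ℂ) ∈ L := subset_adjoin ℚ _ (by simp)
  have hbL : (l₂ : ℂ) ∈ L := subset_adjoin ℚ _ (by simp)
  have hμL : (l₁ : ℂ) / (l₂ : ℂ) ∈ L := div_mem haL hbL
  haveI : FiniteDimensional ℚ L := by
    apply IntermediateField.finiteDimensional_adjoin
    rintro x hx
    rcases hx with rfl | hx
    · exact ha_int
    · rw [Set.mem_singleton_iff] at hx; subst hx; exact hb_int
  set aL : L := ⟨_, haL⟩ with haLdef
  set bL : L := ⟨_, hbL⟩ with hbLdef
  set μL : L := ⟨_, hμL⟩ with hμLdef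
  have hvalinj : Function.Injective (algebraMap L ℂ) := (algebraMap L ℂ).injective
  have hμLdiv : μL = aL / bL := by
    apply Subtype.ext
    push_cast
    rfl
  -- minpolys of elements of L
  have hminaL : minpoly ℚ aL = p := by
    rw [← hminA]
    exact (minpoly.algebraMap_eq hvalinj aL).symm
  have hminμL : minpoly ℚ μL = q := by
    rw [← hminM]
    exact (minpoly.algebraMap_eq hvalinj μL).symm
  have haL_int : IsIntegral ℚ aL := IsIntegral.of_finite ℚ aL
  have hμL_int : IsIntegral ℚ μL := IsIntegral.of_finite ℚ μL
  -- degree divisibilities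
  have d3 : 3 ∣ Module.finrank ℚ L := by
    have := minpoly.degree_dvd haL_int
    rwa [hminaL, hdeg₁] at this
  have d2 : 2 ∣ Module.finrank ℚ L := by
    have := minpoly.degree_dvd hμL_int
    rwa [hminμL, hdeg] at this
  have d6 : 6 ∣ Module.finrank ℚ L := by
    have : (2 * 3 : ℕ) ∣ Module.finrank ℚ L :=
      Nat.Coprime.mul_dvd_of_dvd_of_dvd (by norm_num) d2 d3
    simpa using this
  -- aeval of elements in L
  have haevalaL : aeval aL p = 0 := by
    have h1 : aeval ((aL : ℂ)) p = 0 := by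
      rw [← hminA]; exact minpoly.aeval ℚ _
    rw [IntermediateField.aeval_coe] at h1
    exact_mod_cast h1
  have haevalbL : aeval bL p = 0 := by
    have h1 : aeval ((bL : ℂ)) p = 0 := by
      rw [← hminB]; exact minpoly.aeval ℚ _
    rw [IntermediateField.aeval_coe] at h1
    exact_mod_cast h1
  have haevalμL : aeval μL q = 0 := by
    have h1 : aeval ((μL : ℂ)) q = 0 := by
      rw [← hminM]; exact minpoly.aeval ℚ _
    rw [IntermediateField.aeval_coe] at h1
    exact_mod_cast h1
  -- counting embeddings
  classical
  set R : Finset ℂ := M.toFinset with hR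
  have hRcard : R.card = 3 := by
    rw [hR, Multiset.toFinset_card_of_nodup hnodup, hMcard]
  set D : Finset (ℂ × ℂ) := R.offDiag with hD
  have hDcard : D.card = 6 := by
    rw [hD, Finset.offDiag_card, hRcard]
  have keyroot : ∀ (σ : L →ₐ[ℚ] ℂ) (x : L), aeval x p = 0 → σ x ∈ M := by
    intro σ x hx
    apply rootM
    rw [aeval_algHom_apply σ x p, hx, map_zero]
  set Φ : (L →ₐ[ℚ] ℂ) → ↥D := fun σ => ⟨(σ aL, σ bL), by
    rw [hD, Finset.mem_offDiag]
    refine ⟨Multiset.mem_toFinset.mpr (keyroot σ aL haevalaL),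
      Multiset.mem_toFinset.mpr (keyroot σ bL haevalbL), ?_⟩
    intro h
    apply hab
    have : aL = bL := σ.toRingHom.injective h
    exact congrArg Subtype.val this⟩ with hΦ
  have hinj : Function.Injective Φ := by
    intro σ τ h
    rw [hΦ] at h
    simp only [Subtype.mk_eq_mk, Prod.mk.injEq] at h
    apply IntermediateField.adjoin_algHom_ext
    rintro x hx
    rcases hx with rfl | hx
    · exact h.1
    · rw [Set.mem_singleton_iff] at hx; subst hx; exact h.2
  have hfr : Module.finrank ℚ L = 6 := by
    refine le_antisymm ?_ (Nat.le_of_dvd Module.finrank_pos d6)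
    have := Fintype.card_le_of_injective Φ hinj
    rwa [AlgHom.card ℚ L ℂ, Fintype.card_coe, hDcard] at this
  have hbij : Function.Bijective Φ := by
    rw [Fintype.bijective_iff_injective_and_card]
    refine ⟨hinj, ?_⟩
    rw [AlgHom.card ℚ L ℂ, Fintype.card_coe, hDcard, hfr]
  -- every ratio of distinct roots is a root of q
  have ratio_root : ∀ r s : ℂ, r ∈ M → s ∈ M → r ≠ s → aeval (r / s) q = 0 := by
    intro r s hr hs hrs
    obtain ⟨σ, hσ⟩ := hbij.2 ⟨(r, s), by
      rw [hD, Finset.mem_offDiag]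
      exact ⟨Multiset.mem_toFinset.mpr hr, Multiset.mem_toFinset.mpr hs, hrs⟩⟩
    rw [hΦ] at hσ
    simp only [Subtype.mk_eq_mk, Prod.mk.injEq] at hσ
    have : σ μL = r / s := by
      rw [hμLdiv, map_div₀, hσ.1, hσ.2]
    rw [← this, aeval_algHom_apply σ μL q, haevalμL, map_zero]
  -- roots of q are exactly μ and μ⁻¹
  set μ : ℂ := (l₁ : ℂ) / (l₂ : ℂ) with hμdef
  have hμ0 : μ ≠ 0 := div_ne_zero ha0 hb0
  have hμ1 : μ ≠ 1 := by
    intro h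
    rw [hμdef] at h
    exact hab ((div_eq_one_iff_eq hb0).mp h)
  have hμaeval : aeval μ q = 0 := by rw [← hminM]; exact minpoly.aeval ℚ _
  have hμinv_aeval : aeval μ⁻¹ q = 0 := by
    have := ratio_root (l₂ : ℂ) (l₁ : ℂ) hbM haM hab.symm
    rwa [hμdef, inv_div]
  have hμμinv : μ ≠ μ⁻¹ := by
    intro h
    have h2 : μ * μ = 1 := by
      nth_rewrite 2 [h]
      exact mul_inv_cancel₀ hμ0
    have h3 : (l₁ / l₂) * (l₁ / l₂) = 1 := by
      have : ((l₁ / l₂ : ℝ) : ℂ) * ((l₁ / l₂ : ℝ) : ℂ) = 1 := by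
        push_cast
        convert h2 using 2 <;> rw [hμdef]
      exact_mod_cast this
    have ht : 0 < l₁ / l₂ := div_pos hpos₁ hpos₂
    have ht1 : l₁ / l₂ ≠ 1 := fun hh => hne ((div_eq_one_iff_eq hl₂0).mp hh)
    rcases mul_eq_zero.mp (show (l₁ / l₂ - 1) * (l₁ / l₂ + 1) = 0 by linear_combination h3) with h4 | h4
    · exact ht1 (by linarith)
    · linarith
  have qroot2 : ∀ z : ℂ, aeval z q = 0 → z = μ ∨ z = μ⁻¹ := by
    intro z hz
    by_contra hcon
    push_neg at hcon
    obtain ⟨hz1, hz2⟩ := hcon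
    have hmem : ∀ w : ℂ, aeval w q = 0 → w ∈ (q.map (algebraMap ℚ ℂ)).roots := by
      intro w hw
      rw [mem_roots_map hq0]
      rwa [aeval_def] at hw
    have hsub : ({μ, μ⁻¹, z} : Multiset ℂ) ≤ (q.map (algebraMap ℚ ℂ)).roots := by
      rw [Multiset.le_iff_subset (by
        simp only [Multiset.insert_eq_cons, Multiset.nodup_cons, Multiset.mem_cons,
          Multiset.mem_singleton, Multiset.nodup_singleton, and_true]
        refine ⟨?_, ?_⟩
        · push_neg
          exact ⟨hμμinv, fun h => hz1 h.symm⟩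
        · exact fun h => hz2 h.symm)]
      intro w hw
      simp only [Multiset.insert_eq_cons, Multiset.mem_cons, Multiset.mem_singleton] at hw
      rcases hw with rfl | rfl | rfl
      · exact hmem _ hμaeval
      · exact hmem _ hμinv_aeval
      · exact hmem _ hz
    have h3 : (3 : ℕ) ≤ Multiset.card (q.map (algebraMap ℚ ℂ)).roots := by
      have := Multiset.card_le_card hsub
      simpa using this
    have h2 : Multiset.card (q.map (algebraMap ℚ ℂ)).roots ≤ 2 := by
      have := card_roots' (q.map (algebraMap ℚ ℂ))
      rwa [natDegree_map, hdeg] at this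
    omega
  -- the cycle
  have hx := qroot2 _ (ratio_root (l₂ : ℂ) c hbM hcM hcb.symm)
  have hy := qroot2 _ (ratio_root c (l₁ : ℂ) hcM haM hca)
  have hprod : μ * ((l₂ : ℂ) / c) * (c / (l₁ : ℂ)) = 1 := by
    rw [hμdef]
    field_simp
  have hμ3 : μ * μ * μ = 1 := by
    rcases hx with hx | hx <;> rcases hy with hy | hy
    · rw [hx, hy] at hprod; exact hprod
    all_goals
      rw [hx, hy] at hprod
      field_simp at hprod
      first
      | exact hprod
      | exact absurd hprod hμ1
      | exact absurd hprod.symm hμ1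
      | (exfalso; revert hprod; simp [hμ1, hμμinv, hμ0, sub_eq_zero]; intro hh; exact hμ1 hh)
  -- μ³ = 1 with μ positive real ⇒ μ = 1, contradiction
  have hreal : (l₁ / l₂) ^ 3 = 1 := by
    have : ((l₁ / l₂ : ℝ) : ℂ) ^ 3 = 1 := by
      push_cast
      rw [show ((l₁ : ℂ) / l₂) ^ 3 = μ * μ * μ by rw [hμdef]; ring]
      exact hμ3
    exact_mod_cast this
  have ht : 0 < l₁ / l₂ := div_pos hpos₁ hpos₂
  have ht1 : l₁ / l₂ ≠ 1 := fun hh => hne ((div_eq_one_iff_eq hl₂0).mp hh)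
  rcases lt_trichotomy (l₁ / l₂) 1 with h | h | h
  · have := pow_lt_one₀ ht.le h (three_ne_zero)
    rw [hreal] at this
    exact lt_irrefl _ this
  · exact ht1 h
  · have := one_lt_pow₀ h (three_ne_zero)
    rw [hreal] at this
    exact lt_irrefl _ this
end
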